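/- Let f : ℝ^d → ℝ be twice continuously differentiable and suppose for all w, w' ∈ ℝ^d, ‖∇f(w')-∇f(w)‖ ≤ (L₀ + L₁·∫₀¹‖∇f(θw'+(1-θ)w)‖ dθ)·‖w'-w‖ with L₀, L₁ > 0. Then ‖∇²f(w)‖ ≤ L₀ + L₁‖∇f(w)‖ for all w, where ‖·‖ on the Hessian is the operator norm. -/

import Mathlib

/-!
Fix `w`. The hypothesis says that the gradient is Lipschitz at `w` with the variable constant
`K w' = L₀ + L₁ ∫₀¹ ‖∇f(θ w' + (1 - θ) w)‖ dθ`, and `K w' → L₀ + L₁ ‖∇f w‖` as `w' → w` because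
the integrand becomes the constant `‖∇f w‖`. A derivative is bounded in operator norm by every
local Lipschitz constant at the point, hence by this limit.
-/

open Filter Topology InnerProductSpace

theorem ContDiff.gradient {F : Type*} [NormedAddCommGroup F] [InnerProductSpace ℝ F]
    [CompleteSpace F] {f : F → ℝ} {m n : WithTop ℕ∞} (hf : ContDiff ℝ n f) (hmn : m + 1 ≤ n) :
    ContDiff ℝ m (gradient f) :=
  (toDual ℝ F).symm.contDiff.comp (hf.fderiv_right hmn)

theorem HasFDerivAt.le_of_lip_of_tendsto {E F : Type*} [NormedAddCommGroup E] [NormedSpace ℝ E]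
    [NormedAddCommGroup F] [NormedSpace ℝ F] {g : E → F} {g' : E →L[ℝ] F} {x₀ : E}
    (hg : HasFDerivAt g g' x₀) {K : E → ℝ} {C : ℝ} (hC : 0 ≤ C)
    (hlip : ∀ᶠ x in 𝓝 x₀, ‖g x - g x₀‖ ≤ K x * ‖x - x₀‖) (hK : Tendsto K (𝓝 x₀) (𝓝 C)) :
    ‖g'‖ ≤ C := by
  refine le_of_forall_gt_imp_ge_of_dense fun C' hC' => hg.le_of_lip' (hC.trans hC'.le) ?_
  filter_upwards [hlip, hK.eventually (gt_mem_nhds hC')] with x hx hKx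
  exact hx.trans (mul_le_mul_of_nonneg_right hKx.le (norm_nonneg _))

theorem tendsto_intervalIntegral_segment {E F : Type*} [NormedAddCommGroup E] [NormedSpace ℝ E]
    [NormedAddCommGroup F] [NormedSpace ℝ F] [CompleteSpace F] {h : E → F} (hh : Continuous h) (x : E) :
    Tendsto (fun y => ∫ θ in (0:ℝ)..1, h (θ • y + (1 - θ) • x)) (𝓝 x) (𝓝 (h x)) := by
  have hcont : Continuous fun y => ∫ θ in (0:ℝ)..1, h (θ • y + (1 - θ) • x) :=
    intervalIntegral.continuous_parametric_intervalIntegral_of_continuous' (by fun_prop) 0 1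
  convert hcont.tendsto x using 2
  simp [← add_smul]

theorem integral_condition_implies_hessian_bound {d : ℕ}
    (f : EuclideanSpace ℝ (Fin d) → ℝ) (hf : ContDiff ℝ 2 f)
    (L₀ L₁ : ℝ) (hL₀ : 0 < L₀) (hL₁ : 0 < L₁)
    (hsmooth : ∀ w w' : EuclideanSpace ℝ (Fin d),
      ‖gradient f w' - gradient f w‖ ≤
        (L₀ + L₁ * ∫ θ in (0:ℝ)..1, ‖gradient f (θ • w' + (1 - θ) • w)‖) * ‖w' - w‖) :
    ∀ w : EuclideanSpace ℝ (Fin d),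
      ‖fderiv ℝ (gradient f) w‖ ≤ L₀ + L₁ * ‖gradient f w‖ := by
  have hgrad : ContDiff ℝ 1 (gradient f) := hf.gradient (by norm_num)
  intro w
  have hK : Tendsto (fun w' => L₀ + L₁ * ∫ θ in (0:ℝ)..1, ‖gradient f (θ • w' + (1 - θ) • w)‖)
      (𝓝 w) (𝓝 (L₀ + L₁ * ‖gradient f w‖)) :=
    (tendsto_intervalIntegral_segment hgrad.continuous.norm w).const_mul L₁ |>.const_add L₀
  exact ((hgrad.differentiable one_ne_zero) w).hasFDerivAt.le_of_lip_of_tendsto (by positivity)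
    (Eventually.of_forall (hsmooth w)) hK
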